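/- arXiv:1010.2072 — 2 statements merged into one kernel-verified Lean document; each statement's English description precedes it below -/
import Mathlib

section
/- There exists a constant C > 0 such that for every ε ∈ (0,1], every δ ∈ (0, π/2), and every twice continuously differentiable function u : ℝ² → ℂ on the closure of the strip Ω = {(x₁,x₂) : 0 < x₂ < π} with ∫_Ω (|u|² + ‖∇u‖² + ‖∇²u‖²) dx < ∞, one has ∑_{j∈ℤ} ∫_{επj−εδ}^{επj+εδ} |u(x₁, 0)|² dx₁ ≤ C² δ ∫_Ω (|u|² + ‖∇u‖² + ‖∇²u‖²) dx. -/
/-!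
On a rectangle with sides `ℓ₁ × ℓ₂`, the one-dimensional estimate
`‖f t₀‖² ≤ (2/ℓ) ∫ ‖f‖² + 2ℓ ∫ ‖f'‖²`, applied first in `x₁` and then in `x₂` to `u` and `∂₁u`,
bounds `‖u‖²` at every point of the closed rectangle, boundary included, by
`(2/ℓ₁ + 2ℓ₁)(2/ℓ₂ + 2ℓ₂)` times the `W²₂`-energy of `u` on the rectangle.
Cut the strip into the disjoint cells `(επj - επ/2, επj + επ/2) × (0, π)`. The `j`-th trace
interval has length `2εδ ≤ επ` and lies in the base of the `j`-th cell, so its contribution is at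
most `2εδ (2/(επ) + 2επ)(2/π + 2π) = δ (4/π + 4ε²π)(2/π + 2π) ≤ 100 δ` times the energy of the
cell; summing over the disjoint cells gives the claim with `C = 10`.
-/

open Real Set MeasureTheory Filter Topology

theorem sq_setIntegral_le_measureReal_mul_setIntegral_sq {X : Type*} [MeasurableSpace X]
    {μ : Measure X} {s : Set X} {g : X → ℝ} (hs : μ s ≠ ⊤) (hg : IntegrableOn g s μ)
    (hg2 : IntegrableOn (fun x => g x ^ 2) s μ) :
    (∫ x in s, g x ∂μ) ^ 2 ≤ μ.real s * ∫ x in s, g x ^ 2 ∂μ := by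
  rcases eq_or_ne (μ s) 0 with h0 | h0
  · simp [Measure.restrict_eq_zero.2 h0]
  have hm : 0 < μ.real s := ENNReal.toReal_pos h0 hs
  have jensen := (even_two.convexOn_pow (𝕜 := ℝ)).map_set_average_le
    (continuous_pow 2).continuousOn isClosed_univ h0 hs (ae_of_all _ fun _ => mem_univ _) hg hg2
  simp only [setAverage_eq, smul_eq_mul] at jensen
  rw [mul_pow, inv_pow, sq (μ.real s), mul_inv, mul_assoc] at jensen
  have := (mul_le_mul_iff_right₀ (inv_pos.2 hm)).1 jensen
  rwa [inv_mul_le_iff₀ hm] at this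

theorem MeasureTheory.IntegrableOn.integrableOn_setIntegral_prod_left {α β F : Type*}
    [MeasurableSpace α] [MeasurableSpace β] [NormedAddCommGroup F] [NormedSpace ℝ F]
    {μ : Measure α} {ν : Measure β} [SFinite μ] [SFinite ν] {f : α × β → F} {s : Set α} {t : Set β}
    (hf : IntegrableOn f (s ×ˢ t) (μ.prod ν)) :
    IntegrableOn (fun x => ∫ y in t, f (x, y) ∂ν) s μ := by
  rw [IntegrableOn, ← Measure.prod_restrict] at hf
  exact hf.integral_prod_left

theorem tsum_le_mul_setIntegral_of_le_setIntegral {ι X : Type*} [Countable ι] [MeasurableSpace X]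
    {μ : Measure X} {f : X → ℝ} {s : Set X} {Q : ι → Set X} {a : ι → ℝ} {K : ℝ}
    (hf₀ : 0 ≤ᵐ[μ.restrict s] f) (hf : IntegrableOn f s μ) (hQ : ∀ i, MeasurableSet (Q i))
    (hQd : Pairwise (Function.onFun Disjoint Q)) (hQs : ∀ i, Q i ⊆ s) (hK : 0 ≤ K)
    (ha₀ : ∀ i, 0 ≤ a i) (ha : ∀ i, a i ≤ K * ∫ x in Q i, f x ∂μ) :
    ∑' i, a i ≤ K * ∫ x in s, f x ∂μ := by
  have hsum := (hasSum_integral_iUnion hQ hQd (hf.mono_set (iUnion_subset hQs))).mul_left K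
  calc ∑' i, a i ≤ ∑' i, K * ∫ x in Q i, f x ∂μ :=
        Summable.tsum_le_tsum ha (hsum.summable.of_nonneg_of_le ha₀ ha) hsum.summable
    _ = K * ∫ x in ⋃ i, Q i, f x ∂μ := hsum.tsum_eq
    _ ≤ K * ∫ x in s, f x ∂μ := by
      gcongr
      exact iUnion_subset hQs

theorem pairwise_disjoint_Ioo_mul_intCast_sub_add (c : ℝ) :
    Pairwise (Function.onFun Disjoint fun j : ℤ => Ioo (c * j - c / 2) (c * j + c / 2)) := by
  convert pairwise_disjoint_Ioo_add_zsmul (-(c / 2)) c using 3 with j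
  simp only [zsmul_eq_mul, Int.cast_add, Int.cast_one]
  congr 1 <;> ring

section H2

variable {F G : Type*} [NormedAddCommGroup F] [NormedSpace ℝ F] [NormedAddCommGroup G]
  [NormedSpace ℝ G]

noncomputable def h2Density (u : F → G) (p : F) : ℝ :=
  ‖u p‖ ^ 2 + ‖fderiv ℝ u p‖ ^ 2 + ‖iteratedFDeriv ℝ 2 u p‖ ^ 2

variable (u : F → G) (p : F)

theorem h2Density_nonneg : 0 ≤ h2Density u p := by
  unfold h2Density; positivity

theorem sq_norm_le_h2Density : ‖u p‖ ^ 2 ≤ h2Density u p := by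
  unfold h2Density; nlinarith [norm_nonneg (fderiv ℝ u p), norm_nonneg (iteratedFDeriv ℝ 2 u p)]

theorem sq_norm_fderiv_apply_le_h2Density {v : F} (hv : ‖v‖ ≤ 1) :
    ‖fderiv ℝ u p v‖ ^ 2 ≤ h2Density u p := by
  have := (fderiv ℝ u p).unit_le_opNorm v hv
  unfold h2Density
  nlinarith [norm_nonneg (fderiv ℝ u p v), norm_nonneg (u p), norm_nonneg (iteratedFDeriv ℝ 2 u p)]

theorem sq_norm_fderiv_fderiv_apply_le_h2Density {v w : F} (hv : ‖v‖ ≤ 1) (hw : ‖w‖ ≤ 1) :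
    ‖fderiv ℝ (fderiv ℝ u) p v w‖ ^ 2 ≤ h2Density u p := by
  have h := ((fderiv ℝ (fderiv ℝ u) p v).unit_le_opNorm w hw).trans
    ((fderiv ℝ (fderiv ℝ u) p).unit_le_opNorm v hv)
  rw [← norm_iteratedFDeriv_one, norm_iteratedFDeriv_fderiv] at h
  unfold h2Density
  nlinarith [norm_nonneg (fderiv ℝ (fderiv ℝ u) p v w), norm_nonneg (u p),
    norm_nonneg (fderiv ℝ u p)]

end H2

section Rectangle

variable {E : Type*} [NormedAddCommGroup E] [NormedSpace ℝ E] [CompleteSpace E]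

theorem norm_sub_le_setIntegral_norm_deriv {f f' : ℝ → E} {a b c d : ℝ}
    (hc : c ∈ Icc a b) (hd : d ∈ Icc a b)
    (hf : ContinuousOn f (Icc a b)) (hf' : ContinuousOn f' (Icc a b))
    (hderiv : ∀ t ∈ Ioo a b, HasDerivAt f (f' t) t) :
    ‖f d - f c‖ ≤ ∫ t in Ioo a b, ‖f' t‖ := by
  wlog hcd : c ≤ d generalizing c d
  · rw [norm_sub_rev]; exact this hd hc (le_of_not_ge hcd)
  have hsub : Icc c d ⊆ Icc a b := Icc_subset_Icc hc.1 hd.2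
  rw [← intervalIntegral.integral_eq_sub_of_hasDerivAt_of_le hcd (hf.mono hsub)
    (fun t ht => hderiv t (Ioo_subset_Ioo hc.1 hd.2 ht))
    ((hf'.mono hsub).intervalIntegrable_of_Icc hcd), ← integral_Ioc_eq_integral_Ioo]
  calc ‖∫ t in c..d, f' t‖ ≤ ∫ t in c..d, ‖f' t‖ :=
        intervalIntegral.norm_integral_le_integral_norm hcd
    _ ≤ ∫ t in Ioc a b, ‖f' t‖ := by
      rw [intervalIntegral.integral_of_le hcd]
      exact setIntegral_mono_set (hf'.norm.integrableOn_Icc.mono_set Ioc_subset_Icc_self)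
        (ae_of_all _ fun _ => norm_nonneg _) (Ioc_subset_Ioc hc.1 hd.2).eventuallyLE

theorem sq_norm_le_of_hasDerivAt {f f' : ℝ → E} {a b t₀ : ℝ} (hab : a < b) (ht₀ : t₀ ∈ Icc a b)
    (hf : ContinuousOn f (Icc a b)) (hf' : ContinuousOn f' (Icc a b))
    (hderiv : ∀ t ∈ Ioo a b, HasDerivAt f (f' t) t) :
    ‖f t₀‖ ^ 2 ≤
      2 / (b - a) * (∫ t in Ioo a b, ‖f t‖ ^ 2) + 2 * (b - a) * ∫ t in Ioo a b, ‖f' t‖ ^ 2 := by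
  have hℓ : 0 < b - a := sub_pos.2 hab
  have hvol : volume (Ioo a b) ≠ ⊤ := measure_Ioo_lt_top.ne
  have hint {g : ℝ → ℝ} (hg : ContinuousOn g (Icc a b)) : IntegrableOn g (Ioo a b) :=
    hg.integrableOn_Icc.mono_set Ioo_subset_Icc_self
  set R := ∫ t in Ioo a b, ‖f' t‖
  set S := ∫ t in Ioo a b, ‖f' t‖ ^ 2
  have hR : R ^ 2 ≤ (b - a) * S := by
    simpa [Real.volume_real_Ioo_of_le hab.le] using
      sq_setIntegral_le_measureReal_mul_setIntegral_sq hvol (hint hf'.norm) (hint (hf'.norm.pow 2))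
  have hpointwise : ∀ t ∈ Ioo a b, ‖f t₀‖ ^ 2 ≤ 2 * ‖f t‖ ^ 2 + 2 * ((b - a) * S) := by
    intro t ht
    have hsub := norm_sub_le_setIntegral_norm_deriv (Ioo_subset_Icc_self ht) ht₀ hf hf' hderiv
    have htri : ‖f t₀‖ ≤ ‖f t‖ + R := by
      linarith [norm_le_insert' (f t₀) (f t)]
    nlinarith [sq_nonneg (‖f t‖ - R), norm_nonneg (f t₀)]
  have hJ : IntegrableOn (fun t => 2 * ‖f t‖ ^ 2) (Ioo a b) := (hint (hf.norm.pow 2)).const_mul 2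
  have := setIntegral_ge_of_const_le_real measurableSet_Ioo hvol hpointwise
    (hJ.add (integrableOn_const hvol))
  rw [integral_add hJ (integrableOn_const hvol),
    integral_const_mul, setIntegral_const, Real.volume_real_Ioo_of_le hab.le, smul_eq_mul] at this
  rw [div_mul_eq_mul_div, div_add' _ _ _ hℓ.ne', le_div_iff₀ hℓ]
  nlinarith

theorem setIntegral_sq_norm_slice_le {g g₂ : ℝ × ℝ → E} {F : ℝ × ℝ → ℝ} {a₁ b₁ a₂ b₂ t₀ : ℝ}
    (h₂ : a₂ < b₂) (ht₀ : t₀ ∈ Icc a₂ b₂) (hg : ContinuousOn g (Icc a₁ b₁ ×ˢ Icc a₂ b₂))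
    (hg₂ : ContinuousOn g₂ (Icc a₁ b₁ ×ˢ Icc a₂ b₂))
    (hderiv : ∀ y ∈ Ioo a₁ b₁, ∀ t ∈ Ioo a₂ b₂, HasDerivAt (fun s => g (y, s)) (g₂ (y, t)) t)
    (hF : IntegrableOn F (Ioo a₁ b₁ ×ˢ Ioo a₂ b₂))
    (hgF : ∀ q ∈ Ioo a₁ b₁ ×ˢ Ioo a₂ b₂, ‖g q‖ ^ 2 ≤ F q)
    (hg₂F : ∀ q ∈ Ioo a₁ b₁ ×ˢ Ioo a₂ b₂, ‖g₂ q‖ ^ 2 ≤ F q) :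
    ∫ y in Ioo a₁ b₁, ‖g (y, t₀)‖ ^ 2 ≤
      (2 / (b₂ - a₂) + 2 * (b₂ - a₂)) * ∫ q in Ioo a₁ b₁ ×ˢ Ioo a₂ b₂, F q := by
  have hvert {f : ℝ × ℝ → E} (hf : ContinuousOn f (Icc a₁ b₁ ×ˢ Icc a₂ b₂)) {y : ℝ}
      (hy : y ∈ Ioo a₁ b₁) : ContinuousOn (fun s => f (y, s)) (Icc a₂ b₂) :=
    hf.comp (Continuous.continuousOn (by fun_prop)) fun _ hs => ⟨Ioo_subset_Icc_self hy, hs⟩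
  have hR {f : ℝ × ℝ → E} (hf : ContinuousOn f (Icc a₁ b₁ ×ˢ Icc a₂ b₂)) :
      IntegrableOn (fun q => ‖f q‖ ^ 2) (Ioo a₁ b₁ ×ˢ Ioo a₂ b₂) :=
    ((hf.norm.pow 2).integrableOn_compact (isCompact_Icc.prod isCompact_Icc)).mono_set
      (prod_mono Ioo_subset_Icc_self Ioo_subset_Icc_self)
  have hint₁ := (hR hg).integrableOn_setIntegral_prod_left.const_mul (2 / (b₂ - a₂))
  have hint₂ := (hR hg₂).integrableOn_setIntegral_prod_left.const_mul (2 * (b₂ - a₂))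
  have hbottom : IntegrableOn (fun y => ‖g (y, t₀)‖ ^ 2) (Ioo a₁ b₁) :=
    ((hg.comp (Continuous.continuousOn (by fun_prop)) fun _ hy => ⟨hy, ht₀⟩).norm.pow 2
      |>.integrableOn_Icc).mono_set Ioo_subset_Icc_self
  have hmeas : MeasurableSet (Ioo a₁ b₁ ×ˢ Ioo a₂ b₂) := measurableSet_Ioo.prod measurableSet_Ioo
  calc ∫ y in Ioo a₁ b₁, ‖g (y, t₀)‖ ^ 2
      ≤ ∫ y in Ioo a₁ b₁, (2 / (b₂ - a₂) * (∫ t in Ioo a₂ b₂, ‖g (y, t)‖ ^ 2) +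
          2 * (b₂ - a₂) * ∫ t in Ioo a₂ b₂, ‖g₂ (y, t)‖ ^ 2) :=
        setIntegral_mono_on hbottom (hint₁.add hint₂) measurableSet_Ioo fun y hy =>
          sq_norm_le_of_hasDerivAt h₂ ht₀ (hvert hg hy) (hvert hg₂ hy) (hderiv y hy)
    _ = 2 / (b₂ - a₂) * (∫ q in Ioo a₁ b₁ ×ˢ Ioo a₂ b₂, ‖g q‖ ^ 2) +
          2 * (b₂ - a₂) * ∫ q in Ioo a₁ b₁ ×ˢ Ioo a₂ b₂, ‖g₂ q‖ ^ 2 := by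
      rw [integral_add hint₁ hint₂, integral_const_mul, integral_const_mul,
        ← setIntegral_prod _ (hR hg), ← setIntegral_prod _ (hR hg₂)]
      rfl
    _ ≤ 2 / (b₂ - a₂) * (∫ q in Ioo a₁ b₁ ×ˢ Ioo a₂ b₂, F q) +
          2 * (b₂ - a₂) * ∫ q in Ioo a₁ b₁ ×ˢ Ioo a₂ b₂, F q := by
      gcongr 2 / (b₂ - a₂) * ?_ + 2 * (b₂ - a₂) * ?_
      · exact setIntegral_mono_on (hR hg) hF hmeas hgF
      · exact setIntegral_mono_on (hR hg₂) hF hmeas hg₂F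
    _ = _ := by ring

theorem sq_norm_le_setIntegral_of_hasDerivAt_rectangle {u u₁ u₂ u₁₂ : ℝ × ℝ → E} {F : ℝ × ℝ → ℝ}
    {a₁ b₁ a₂ b₂ x t : ℝ} (h₁ : a₁ < b₁) (h₂ : a₂ < b₂) (hx : x ∈ Icc a₁ b₁)
    (ht : t ∈ Icc a₂ b₂) (hu : ContinuousOn u (Icc a₁ b₁ ×ˢ Icc a₂ b₂))
    (hu₁ : ContinuousOn u₁ (Icc a₁ b₁ ×ˢ Icc a₂ b₂))
    (hu₂ : ContinuousOn u₂ (Icc a₁ b₁ ×ˢ Icc a₂ b₂))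
    (hu₁₂ : ContinuousOn u₁₂ (Icc a₁ b₁ ×ˢ Icc a₂ b₂))
    (hd₁ : ∀ y ∈ Ioo a₁ b₁, HasDerivAt (fun s => u (s, t)) (u₁ (y, t)) y)
    (hd₂ : ∀ y ∈ Ioo a₁ b₁, ∀ s ∈ Ioo a₂ b₂, HasDerivAt (fun s => u (y, s)) (u₂ (y, s)) s)
    (hd₁₂ : ∀ y ∈ Ioo a₁ b₁, ∀ s ∈ Ioo a₂ b₂, HasDerivAt (fun s => u₁ (y, s)) (u₁₂ (y, s)) s)
    (hF : IntegrableOn F (Ioo a₁ b₁ ×ˢ Ioo a₂ b₂))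
    (hle : ∀ q ∈ Ioo a₁ b₁ ×ˢ Ioo a₂ b₂, ‖u q‖ ^ 2 ≤ F q ∧ ‖u₁ q‖ ^ 2 ≤ F q ∧
      ‖u₂ q‖ ^ 2 ≤ F q ∧ ‖u₁₂ q‖ ^ 2 ≤ F q) :
    ‖u (x, t)‖ ^ 2 ≤ (2 / (b₁ - a₁) + 2 * (b₁ - a₁)) * (2 / (b₂ - a₂) + 2 * (b₂ - a₂)) *
      ∫ q in Ioo a₁ b₁ ×ˢ Ioo a₂ b₂, F q := by
  have hℓ : 0 < b₁ - a₁ := sub_pos.2 h₁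
  have hhor {f : ℝ × ℝ → E} (hf : ContinuousOn f (Icc a₁ b₁ ×ˢ Icc a₂ b₂)) :
      ContinuousOn (fun y => f (y, t)) (Icc a₁ b₁) :=
    hf.comp (Continuous.continuousOn (by fun_prop)) fun _ hy => ⟨hy, ht⟩
  grw [sq_norm_le_of_hasDerivAt h₁ hx (hhor hu) (hhor hu₁) hd₁,
    setIntegral_sq_norm_slice_le h₂ ht hu hu₂ hd₂ hF (fun q hq => (hle q hq).1)
      (fun q hq => (hle q hq).2.2.1),
    setIntegral_sq_norm_slice_le h₂ ht hu₁ hu₁₂ hd₁₂ hF (fun q hq => (hle q hq).2.1)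
      (fun q hq => (hle q hq).2.2.2)]
  exact le_of_eq (by ring)

theorem sq_norm_le_setIntegral_of_hasFDerivWithinAt_rectangle {u : ℝ × ℝ → E}
    {D : ℝ × ℝ → ℝ × ℝ →L[ℝ] E} {D2 : ℝ × ℝ → ℝ × ℝ →L[ℝ] ℝ × ℝ →L[ℝ] E} {F : ℝ × ℝ → ℝ}
    {a₁ b₁ a₂ b₂ : ℝ} (h₁ : a₁ < b₁) (h₂ : a₂ < b₂)
    (hu : ContinuousOn u (Icc a₁ b₁ ×ˢ Icc a₂ b₂)) (hD : ContinuousOn D (Icc a₁ b₁ ×ˢ Icc a₂ b₂))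
    (hD2 : ContinuousOn D2 (Icc a₁ b₁ ×ˢ Icc a₂ b₂))
    (huD : ∀ q ∈ Icc a₁ b₁ ×ˢ Icc a₂ b₂, HasFDerivWithinAt u (D q) (Icc a₁ b₁ ×ˢ Icc a₂ b₂) q)
    (hDD2 : ∀ q ∈ Ioo a₁ b₁ ×ˢ Ioo a₂ b₂, HasFDerivAt D (D2 q) q)
    (hF : IntegrableOn F (Ioo a₁ b₁ ×ˢ Ioo a₂ b₂))
    (hle : ∀ q ∈ Ioo a₁ b₁ ×ˢ Ioo a₂ b₂, ‖u q‖ ^ 2 ≤ F q ∧ ‖D q (1, 0)‖ ^ 2 ≤ F q ∧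
      ‖D q (0, 1)‖ ^ 2 ≤ F q ∧ ‖D2 q (0, 1) (1, 0)‖ ^ 2 ≤ F q)
    {p : ℝ × ℝ} (hp : p ∈ Icc a₁ b₁ ×ˢ Icc a₂ b₂) :
    ‖u p‖ ^ 2 ≤ (2 / (b₁ - a₁) + 2 * (b₁ - a₁)) * (2 / (b₂ - a₂) + 2 * (b₂ - a₂)) *
      ∫ q in Ioo a₁ b₁ ×ˢ Ioo a₂ b₂, F q := by
  have hvert : ∀ y t : ℝ, HasDerivAt (Prod.mk y) ((0 : ℝ), (1 : ℝ)) t := fun y t =>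
    (hasDerivAt_const t y).prodMk (hasDerivAt_id t)
  obtain ⟨x, t⟩ := p
  have hline : MapsTo (fun s => (s, t)) (Icc a₁ b₁) (Icc a₁ b₁ ×ˢ Icc a₂ b₂) :=
    fun _ hs => ⟨hs, hp.2⟩
  have hd₁ : ∀ y ∈ Ioo a₁ b₁, HasDerivAt (fun s => u (s, t)) (D (y, t) (1, 0)) y := fun y hy =>
    ((huD (y, t) ⟨Ioo_subset_Icc_self hy, hp.2⟩).comp_hasDerivWithinAt y
      ((hasDerivAt_id' y).prodMk (hasDerivAt_const y t)).hasDerivWithinAt hline).hasDerivAt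
      (Icc_mem_nhds hy.1 hy.2)
  have hd₂ : ∀ y ∈ Ioo a₁ b₁, ∀ s ∈ Ioo a₂ b₂,
      HasDerivAt (fun s => u (y, s)) (D (y, s) (0, 1)) s := fun y hy s hs =>
    ((huD (y, s) ⟨Ioo_subset_Icc_self hy, Ioo_subset_Icc_self hs⟩).hasFDerivAt
      (prod_mem_nhds (Icc_mem_nhds hy.1 hy.2) (Icc_mem_nhds hs.1 hs.2))).comp_hasDerivAt s
      (hvert y s)
  have hd₁₂ : ∀ y ∈ Ioo a₁ b₁, ∀ s ∈ Ioo a₂ b₂,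
      HasDerivAt (fun s => D (y, s) (1, 0)) (D2 (y, s) (0, 1) (1, 0)) s := fun y hy s hs =>
    (ContinuousLinearMap.apply ℝ E ((1 : ℝ), (0 : ℝ))).hasFDerivAt.comp_hasDerivAt s
      ((hDD2 (y, s) ⟨hy, hs⟩).comp_hasDerivAt s (hvert y s))
  exact sq_norm_le_setIntegral_of_hasDerivAt_rectangle h₁ h₂ hp.1 hp.2 hu
    (hD.clm_apply continuousOn_const) (hD.clm_apply continuousOn_const)
    ((hD2.clm_apply continuousOn_const).clm_apply continuousOn_const) hd₁ hd₂ hd₁₂ hF hle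

theorem sq_norm_le_setIntegral_h2Density {u : ℝ × ℝ → E} {a₁ b₁ a₂ b₂ : ℝ} (h₁ : a₁ < b₁)
    (h₂ : a₂ < b₂) (hu : ContDiffOn ℝ 2 u (Icc a₁ b₁ ×ˢ Icc a₂ b₂))
    (hF : IntegrableOn (h2Density u) (Ioo a₁ b₁ ×ˢ Ioo a₂ b₂)) {p : ℝ × ℝ}
    (hp : p ∈ Icc a₁ b₁ ×ˢ Icc a₂ b₂) :
    ‖u p‖ ^ 2 ≤ (2 / (b₁ - a₁) + 2 * (b₁ - a₁)) * (2 / (b₂ - a₂) + 2 * (b₂ - a₂)) *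
      ∫ q in Ioo a₁ b₁ ×ˢ Ioo a₂ b₂, h2Density u q := by
  set K := Icc a₁ b₁ ×ˢ Icc a₂ b₂
  have hK : UniqueDiffOn ℝ K := (uniqueDiffOn_Icc h₁).prod (uniqueDiffOn_Icc h₂)
  have hKnhds : ∀ q ∈ Ioo a₁ b₁ ×ˢ Ioo a₂ b₂, K ∈ 𝓝 q := fun q hq =>
    prod_mem_nhds (Icc_mem_nhds hq.1.1 hq.1.2) (Icc_mem_nhds hq.2.1 hq.2.2)
  set D := fderivWithin ℝ u K
  have hD : ContDiffOn ℝ 1 D K := hu.fderivWithin hK (by norm_num)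
  have hDD2 : ∀ q ∈ Ioo a₁ b₁ ×ˢ Ioo a₂ b₂, HasFDerivAt D (fderivWithin ℝ D K q) q :=
    fun q hq => (hD.differentiableOn one_ne_zero q (mem_of_mem_nhds (hKnhds q hq))
      |>.hasFDerivWithinAt).hasFDerivAt (hKnhds q hq)
  have hD_eq : ∀ q ∈ Ioo a₁ b₁ ×ˢ Ioo a₂ b₂, D q = fderiv ℝ u q := fun q hq =>
    fderivWithin_of_mem_nhds (hKnhds q hq)
  have hD2_eq : ∀ q ∈ Ioo a₁ b₁ ×ˢ Ioo a₂ b₂, fderivWithin ℝ D K q = fderiv ℝ (fderiv ℝ u) q :=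
    fun q hq => by
      rw [← (hDD2 q hq).fderiv]
      exact EventuallyEq.fderiv_eq
        (eventually_of_mem ((isOpen_Ioo.prod isOpen_Ioo).mem_nhds hq) hD_eq)
  have h10 : ‖((1 : ℝ), (0 : ℝ))‖ ≤ 1 := by simp
  have h01 : ‖((0 : ℝ), (1 : ℝ))‖ ≤ 1 := by simp
  refine sq_norm_le_setIntegral_of_hasFDerivWithinAt_rectangle h₁ h₂ hu.continuousOn
    hD.continuousOn (hD.fderivWithin hK (m := 0) le_rfl).continuousOn
    (fun q hq => (hu.differentiableOn (by norm_num) q hq).hasFDerivWithinAt) hDD2 hF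
    (fun q hq => ⟨sq_norm_le_h2Density u q, ?_, ?_, ?_⟩) hp
  · simpa only [hD_eq q hq] using sq_norm_fderiv_apply_le_h2Density u q h10
  · simpa only [hD_eq q hq] using sq_norm_fderiv_apply_le_h2Density u q h01
  · simpa only [hD2_eq q hq] using sq_norm_fderiv_fderiv_apply_le_h2Density u q h01 h10

theorem setIntegral_sq_norm_le_setIntegral_h2Density {u : ℝ × ℝ → E} {a₁ b₁ a₂ b₂ c d t : ℝ}
    (h₁ : a₁ < b₁) (h₂ : a₂ < b₂) (hu : ContDiffOn ℝ 2 u (Icc a₁ b₁ ×ˢ Icc a₂ b₂))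
    (hF : IntegrableOn (h2Density u) (Ioo a₁ b₁ ×ˢ Ioo a₂ b₂)) (hcd : c ≤ d)
    (hsub : Ioo c d ⊆ Icc a₁ b₁) (ht : t ∈ Icc a₂ b₂) :
    ∫ x in Ioo c d, ‖u (x, t)‖ ^ 2 ≤
      (d - c) * (2 / (b₁ - a₁) + 2 * (b₁ - a₁)) * (2 / (b₂ - a₂) + 2 * (b₂ - a₂)) *
        ∫ q in Ioo a₁ b₁ ×ˢ Ioo a₂ b₂, h2Density u q := by
  have h := norm_setIntegral_le_of_norm_le_const (μ := volume) (f := fun x => ‖u (x, t)‖ ^ 2)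
    measure_Ioo_lt_top fun x hx => (Real.norm_of_nonneg (sq_nonneg _)).trans_le
      (sq_norm_le_setIntegral_h2Density h₁ h₂ hu hF (p := (x, t)) ⟨hsub hx, ht⟩)
  rw [Real.volume_real_Ioo_of_le hcd] at h
  linarith [(Real.le_norm_self _).trans h]

theorem setIntegral_sq_norm_trace_le_cell {u : ℝ × ℝ → E} {ε δ : ℝ} (hε₀ : 0 < ε) (hε₁ : ε ≤ 1)
    (hδ₀ : 0 < δ) (hδ : δ < π / 2) (hu : ContDiffOn ℝ 2 u (univ ×ˢ Icc 0 π))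
    (hF : IntegrableOn (h2Density u) (univ ×ˢ Ioo 0 π)) (j : ℤ) :
    ∫ x in Ioo (ε * π * j - ε * δ) (ε * π * j + ε * δ), ‖u (x, 0)‖ ^ 2 ≤
      10 ^ 2 * δ * ∫ p in Ioo (ε * π * j - ε * π / 2) (ε * π * j + ε * π / 2) ×ˢ Ioo 0 π,
        h2Density u p := by
  have hεπ : 0 < ε * π := mul_pos hε₀ pi_pos
  have hεδ : ε * δ ≤ ε * π / 2 := by nlinarith
  have hcell := setIntegral_sq_norm_le_setIntegral_h2Density (c := ε * π * j - ε * δ)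
    (d := ε * π * j + ε * δ) (t := 0)
    (by linarith : ε * π * j - ε * π / 2 < ε * π * j + ε * π / 2) pi_pos
    (hu.mono (prod_mono (subset_univ _) subset_rfl))
    (hF.mono_set (prod_mono (subset_univ _) subset_rfl)) (by nlinarith)
    (Ioo_subset_Icc_self.trans (Icc_subset_Icc (by linarith) (by linarith))) ⟨le_rfl, pi_pos.le⟩
  rw [show ε * π * j + ε * δ - (ε * π * j - ε * δ) = 2 * (ε * δ) by ring,
    show ε * π * j + ε * π / 2 - (ε * π * j - ε * π / 2) = ε * π by ring, sub_zero] at hcell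
  have hcoef : 2 * (ε * δ) * (2 / (ε * π) + 2 * (ε * π)) * (2 / π + 2 * π) ≤ 10 ^ 2 * δ := by
    have hπ₃ := pi_gt_three
    have hπ₄ := pi_lt_d2
    have hsplit : 2 * (ε * δ) * (2 / (ε * π) + 2 * (ε * π)) = δ * (4 / π + 4 * ε ^ 2 * π) := by
      field_simp
      ring
    have h₁ : 4 / π + 4 * ε ^ 2 * π ≤ 14 := by
      have : 4 / π ≤ 4 / 3 := by gcongr
      nlinarith [pow_le_one₀ hε₀.le hε₁ (n := 2)]
    have h₂ : 2 / π + 2 * π ≤ 7 := by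
      have : 2 / π ≤ 2 / 3 := by gcongr
      linarith
    rw [hsplit]
    calc δ * (4 / π + 4 * ε ^ 2 * π) * (2 / π + 2 * π) ≤ δ * 14 * 7 := by gcongr
      _ ≤ 10 ^ 2 * δ := by nlinarith
  exact hcell.trans (mul_le_mul_of_nonneg_right hcoef
    (setIntegral_nonneg (measurableSet_Ioo.prod measurableSet_Ioo) fun p _ => h2Density_nonneg u p))

end Rectangle

/-- There is a constant `C > 0`, independent of `ε`, `δ` and `u`, such that for
every `ε ∈ (0,1]`, every `δ ∈ (0, π/2)` and every `C²` function `u` on the closure of the strip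
`Ω = {0 < x₂ < π}` with finite `W²₂`-energy, the squared `L²`-norm of the boundary trace of `u`
on the union of the intervals `{|x₁ - επj| < εδ, x₂ = 0}`, `j ∈ ℤ`, satisfies
`∑_j ∫_{επj-εδ}^{επj+εδ} |u(x₁,0)|² dx₁ ≤ C² δ ‖u‖²_{W²₂(Ω)}`. -/
theorem stmt1 :
    ∃ C : ℝ, 0 < C ∧
      ∀ ε δ : ℝ, ε ∈ Set.Ioc (0:ℝ) 1 → δ ∈ Set.Ioo (0:ℝ) (π/2) →
      ∀ u : ℝ × ℝ → ℂ,
        ContDiffOn ℝ 2 u (closure {p : ℝ × ℝ | 0 < p.2 ∧ p.2 < π}) →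
        IntegrableOn
          (fun p => ‖u p‖^2 + ‖fderiv ℝ u p‖^2 + ‖iteratedFDeriv ℝ 2 u p‖^2)
          {p : ℝ × ℝ | 0 < p.2 ∧ p.2 < π} volume →
        (∑' j : ℤ, ∫ x in Set.Ioo (ε*π*j - ε*δ) (ε*π*j + ε*δ), ‖u (x, 0)‖^2)
          ≤ C^2 * δ *
            ∫ p in {p : ℝ × ℝ | 0 < p.2 ∧ p.2 < π},
              (‖u p‖^2 + ‖fderiv ℝ u p‖^2 + ‖iteratedFDeriv ℝ 2 u p‖^2) := by
  refine ⟨10, by norm_num, ?_⟩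
  rintro ε δ ⟨hε₀, hε₁⟩ ⟨hδ₀, hδ⟩ u hu hF
  have hstrip : {p : ℝ × ℝ | 0 < p.2 ∧ p.2 < π} = univ ×ˢ Ioo 0 π := by ext; simp
  rw [hstrip, closure_prod_eq, closure_univ, closure_Ioo pi_pos.ne] at hu
  rw [hstrip] at hF ⊢
  exact tsum_le_mul_setIntegral_of_le_setIntegral (ae_of_all _ (h2Density_nonneg u)) hF
    (fun _ => measurableSet_Ioo.prod measurableSet_Ioo)
    (fun i j hij => (pairwise_disjoint_Ioo_mul_intCast_sub_add (ε * π) hij).set_prod_left _ _)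
    (fun _ => prod_mono (subset_univ _) subset_rfl) (by positivity)
    (fun _ => setIntegral_nonneg measurableSet_Ioo fun _ _ => sq_nonneg _)
    (setIntegral_sq_norm_trace_le_cell hε₀ hε₁ hδ₀ hδ hu hF)
end

section
/- Let Λ(ε, μ) be the unique real-analytic solution near Λ = 1/4 of the equation T(ε, μ, Λ) := √Λ cos(√Λ π) + μ sin(√Λ π) − ε³ μ Λ^{3/2} θ(ε²Λ) cos(√Λ π) = 0 with Λ(0,0) = 1/4, where θ(β) := −∑_{j=1}^∞ 1/( j √(4j²−β)(2j+√(4j²−β)) ). Then for all sufficiently small ε, the second partial derivative of Λ with respect to μ at μ = 0 is given by ∂²Λ/∂μ² (ε, 0) = (1/π²) · ( −8 + ε³ π θ(ε²/4) ). -/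
open Real Set

/-- The function `θ(β) = -∑_{j≥1} 1/( j √(4j²-β) (2j+√(4j²-β)) )`. -/
noncomputable def theta (β : ℝ) : ℝ :=
  -∑' j : ℕ+, 1/(((j:ℕ):ℝ) * Real.sqrt (4*((j:ℕ):ℝ)^2 - β) *
      (2*((j:ℕ):ℝ) + Real.sqrt (4*((j:ℕ):ℝ)^2 - β)))

/-- `T(ε, μ, Λ) = √Λ cos(√Λ π) + μ sin(√Λ π) - ε³ μ Λ^{3/2} θ(ε²Λ) cos(√Λ π)`. -/
noncomputable def Tfun (ε μ Λ : ℝ) : ℝ :=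
  Real.sqrt Λ * Real.cos (Real.sqrt Λ * π) + μ * Real.sin (Real.sqrt Λ * π)
    - ε^3 * μ * Λ ^ ((3:ℝ)/2) * theta (ε^2*Λ) * Real.cos (Real.sqrt Λ * π)

/-!
Write `T(ε, μ, Λ) = T₀(Λ) + μ T₁(ε, Λ)` with `T₀(Λ) = √Λ cos(√Λ π)`. Uniqueness of the root
near `1/4` gives `Λ(ε, 0) = 1/4`, and along `u(μ) = Λ(ε, μ)` the identity
`T₀(u(μ)) = μ · (-T₁(ε, u(μ)))` holds. Matching both sides to second order at `μ = 0` (by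
L'Hôpital's rule, as the right-hand side is only once differentiable) yields
`T₀'(1/4) u'(0) = -T₁(ε, 1/4) = -1`, so `u'(0) = 2/π`, and
`T₀''(1/4) u'(0)² + T₀'(1/4) u''(0) = -2 ∂_Λ T₁(ε, 1/4) u'(0)`. Since `cos(√Λ π)` vanishes at
`Λ = 1/4`, the derivative `∂_Λ T₁(ε, 1/4) = ε³ π θ(ε²/4) / 8` needs only the continuity of `θ`,
which holds on `β < 4` by uniform convergence of the series.
-/

open Filter Topology

lemma HasDerivAt.mul_of_eq_zero {p q : ℝ → ℝ} {x p' : ℝ} (hp : HasDerivAt p p' x)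
    (hpx : p x = 0) (hq : ContinuousAt q x) :
    HasDerivAt (fun y => p y * q y) (p' * q x) x := by
  rw [hasDerivAt_iff_tendsto_slope] at hp ⊢
  refine (hp.mul (hq.tendsto.mono_left nhdsWithin_le_nhds)).congr fun y => ?_
  simp only [slope_def_field, hpx]
  ring

lemma eq_and_eq_two_mul_of_eventuallyEq_mul {f f' g : ℝ → ℝ} {f'' g' : ℝ}
    (hf : ∀ᶠ x in 𝓝 0, HasDerivAt f (f' x) x) (hf' : HasDerivAt f' f'' 0)
    (hfg : f =ᶠ[𝓝 0] fun x => x * g x) (hg : HasDerivAt g g' 0) :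
    f' 0 = g 0 ∧ f'' = 2 * g' := by
  have hxg : HasDerivAt (fun x => x * g x) (g 0) 0 :=
    ((hasDerivAt_id' 0).mul hg).congr_deriv (by simp)
  have hf'0 : f' 0 = g 0 := hf.self_of_nhds.unique (hxg.congr_of_eventuallyEq hfg)
  refine ⟨hf'0, ?_⟩
  have hlim : Tendsto (fun x => (f x - g 0 * x) / x ^ 2) (𝓝[≠] 0) (𝓝 (f'' / 2)) := by
    refine HasDerivAt.lhopital_zero_nhdsNE (f' := fun x => f' x - g 0) (g' := fun x => 2 * x)
      (hf.filter_mono nhdsWithin_le_nhds |>.mono fun x hx =>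
        (hx.sub ((hasDerivAt_id' x).const_mul (g 0))).congr_deriv (by simp))
      (.of_forall fun x => by simpa using hasDerivAt_pow 2 x) ?_ ?_ ?_ ?_
    · filter_upwards [self_mem_nhdsWithin] with x hx using mul_ne_zero two_ne_zero hx
    · have hf0 : f 0 = 0 := by simpa using hfg.self_of_nhds
      refine tendsto_nhdsWithin_of_tendsto_nhds ?_
      have hcont : ContinuousAt (fun x => f x - g 0 * x) 0 :=
        hf.self_of_nhds.continuousAt.sub (continuousAt_const.mul (continuousAt_id' 0))
      simpa [hf0] using hcont.tendsto
    · exact tendsto_nhdsWithin_of_tendsto_nhds (by simpa using (continuous_pow 2).tendsto (0:ℝ))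
    · refine ((hasDerivAt_iff_tendsto_slope.mp hf').div_const 2).congr' ?_
      filter_upwards [self_mem_nhdsWithin] with x hx
      rw [slope_def_field, hf'0]
      field_simp
      ring
  have hslope : Tendsto (fun x => (f x - g 0 * x) / x ^ 2) (𝓝[≠] 0) (𝓝 g') := by
    refine (hasDerivAt_iff_tendsto_slope.mp hg).congr' ?_
    filter_upwards [self_mem_nhdsWithin, hfg.filter_mono nhdsWithin_le_nhds] with x hx hfx
    have hx : x ≠ 0 := hx
    rw [hfx, slope_def_field]
    field_simp
    ring
  linarith [tendsto_nhds_unique hlim hslope]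

noncomputable def thetaTerm (β : ℝ) (j : ℕ+) : ℝ :=
  1 / (((j:ℕ):ℝ) * √(4 * ((j:ℕ):ℝ)^2 - β) * (2 * ((j:ℕ):ℝ) + √(4 * ((j:ℕ):ℝ)^2 - β)))

lemma norm_thetaTerm_le {c β : ℝ} (hc0 : 0 < c) (hc4 : c < 4) (hβ : β < c) (j : ℕ+) :
    ‖thetaTerm β j‖ ≤ 1 / (√(4 - c) * ((j:ℕ):ℝ)^2) := by
  set n : ℝ := ((j:ℕ):ℝ)
  have hn : 1 ≤ n := Nat.one_le_cast.mpr j.pos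
  have hsqrt : √(4 - c) * n ≤ √(4 * n^2 - β) := by
    refine Real.le_sqrt_of_sq_le ?_
    rw [mul_pow, Real.sq_sqrt (by linarith)]
    nlinarith [mul_le_mul_of_nonneg_left (one_le_pow₀ (n := 2) hn) hc0.le]
  have hden : √(4 - c) * n ^ 2 ≤ n * √(4 * n^2 - β) * (2 * n + √(4 * n^2 - β)) := by
    have h2n : 1 ≤ 2 * n + √(4 * n^2 - β) := by linarith [Real.sqrt_nonneg (4 * n^2 - β)]
    calc √(4 - c) * n ^ 2 = n * (√(4 - c) * n) * 1 := by ring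
      _ ≤ n * √(4 * n^2 - β) * (2 * n + √(4 * n^2 - β)) := by gcongr
  rw [thetaTerm, Real.norm_eq_abs, abs_of_nonneg (by positivity)]
  exact one_div_le_one_div_of_le (by positivity) hden

lemma continuousAt_theta {β : ℝ} (hβ : β < 4) : ContinuousAt theta β := by
  obtain ⟨c, hβc, hc4⟩ := exists_between (max_lt hβ four_pos)
  have hc0 : 0 < c := (le_max_right _ _).trans_lt hβc
  have hsum : ContinuousOn (fun β => ∑' j, thetaTerm β j) (Iio c) := by
    refine continuousOn_tsum (fun j => ?_) ?_ fun j β' hβ' => norm_thetaTerm_le hc0 hc4 hβ' j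
    · have hn : (1:ℝ) ≤ ((j:ℕ):ℝ) := Nat.one_le_cast.mpr j.pos
      refine continuousOn_const.div (by fun_prop) fun β' hβ' => ?_
      have : 0 < √(4 * ((j:ℕ):ℝ)^2 - β') := Real.sqrt_pos.mpr (by nlinarith [mem_Iio.mp hβ'])
      positivity
    · have hsum : Summable fun j : ℕ+ => 1 / ((j:ℕ):ℝ)^2 :=
        (Real.summable_one_div_nat_pow.mpr one_lt_two).comp_injective PNat.coe_injective
      exact (hsum.mul_left (1 / √(4 - c))).congr fun j => by rw [one_div_mul_one_div]
  exact (hsum.continuousAt (Iio_mem_nhds (le_max_left _ _ |>.trans_lt hβc))).neg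

lemma sqrt_one_div_four : √(1/4 : ℝ) = 1/2 := by
  rw [show (1/4 : ℝ) = (1/2)^2 by norm_num, Real.sqrt_sq (by norm_num)]

lemma cos_one_div_two_mul_pi : cos (1/2 * π) = 0 := by
  rw [one_div_mul_eq_div, cos_pi_div_two]

lemma sin_one_div_two_mul_pi : sin (1/2 * π) = 1 := by
  rw [one_div_mul_eq_div, sin_pi_div_two]

lemma one_div_four_rpow_three_div_two : (1/4 : ℝ) ^ ((3:ℝ)/2) = 1/8 := by
  rw [show (3:ℝ)/2 = (1/2) * (3:ℕ) by norm_num, Real.rpow_mul (by norm_num),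
    ← Real.sqrt_eq_rpow, sqrt_one_div_four, Real.rpow_natCast]
  norm_num

noncomputable def Tfun₀ (L : ℝ) : ℝ := √L * cos (√L * π)

noncomputable def Tfun₀' (L : ℝ) : ℝ := cos (√L * π) / (2 * √L) - π / 2 * sin (√L * π)

noncomputable def Tfun₁ (ε L : ℝ) : ℝ :=
  sin (√L * π) - ε^3 * (L ^ ((3:ℝ)/2) * cos (√L * π) * theta (ε^2 * L))

lemma Tfun_eq (ε μ L : ℝ) : Tfun ε μ L = Tfun₀ L + μ * Tfun₁ ε L := by
  unfold Tfun Tfun₀ Tfun₁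
  ring

lemma hasDerivAt_sqrt_mul_pi {L : ℝ} (hL : 0 < L) :
    HasDerivAt (fun x => √x * π) (π / (2 * √L)) L :=
  ((Real.hasDerivAt_sqrt hL.ne').mul_const π).congr_deriv (by ring)

lemma hasDerivAt_cos_sqrt_mul_pi {L : ℝ} (hL : 0 < L) :
    HasDerivAt (fun x => cos (√x * π)) (-sin (√L * π) * (π / (2 * √L))) L :=
  (hasDerivAt_cos _).comp L (hasDerivAt_sqrt_mul_pi hL)

lemma hasDerivAt_sin_sqrt_mul_pi {L : ℝ} (hL : 0 < L) :
    HasDerivAt (fun x => sin (√x * π)) (cos (√L * π) * (π / (2 * √L))) L :=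
  (hasDerivAt_sin _).comp L (hasDerivAt_sqrt_mul_pi hL)

lemma hasDerivAt_Tfun₀ {L : ℝ} (hL : 0 < L) : HasDerivAt Tfun₀ (Tfun₀' L) L := by
  have hs : √L ≠ 0 := (Real.sqrt_pos.mpr hL).ne'
  refine ((Real.hasDerivAt_sqrt hL.ne').mul (hasDerivAt_cos_sqrt_mul_pi hL)).congr_deriv ?_
  unfold Tfun₀'
  field_simp
  ring

lemma Tfun₀_one_div_four : Tfun₀ (1/4) = 0 := by
  simp only [Tfun₀, sqrt_one_div_four, cos_one_div_two_mul_pi, mul_zero]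

lemma Tfun₀'_one_div_four : Tfun₀' (1/4) = -(π / 2) := by
  simp only [Tfun₀', sqrt_one_div_four, cos_one_div_two_mul_pi, sin_one_div_two_mul_pi]
  ring

lemma hasDerivAt_Tfun₀' : HasDerivAt Tfun₀' (-π) (1/4) := by
  have hL : (0:ℝ) < 1/4 := by norm_num
  have hden := ((Real.hasDerivAt_sqrt hL.ne').const_mul 2)
  refine (((hasDerivAt_cos_sqrt_mul_pi hL).div hden (by norm_num [sqrt_one_div_four])).sub
    ((hasDerivAt_sin_sqrt_mul_pi hL).const_mul (π / 2))).congr_deriv ?_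
  simp only [sqrt_one_div_four, cos_one_div_two_mul_pi, sin_one_div_two_mul_pi]
  ring

lemma Tfun₁_one_div_four (ε : ℝ) : Tfun₁ ε (1/4) = 1 := by
  simp only [Tfun₁, sqrt_one_div_four, cos_one_div_two_mul_pi, sin_one_div_two_mul_pi]
  ring

lemma hasDerivAt_Tfun₁ {ε : ℝ} (hθ : ContinuousAt theta (ε^2 / 4)) :
    HasDerivAt (Tfun₁ ε) (ε^3 * π / 8 * theta (ε^2 / 4)) (1/4) := by
  have hL : (0:ℝ) < 1/4 := by norm_num
  have hP : HasDerivAt (fun x : ℝ => x ^ ((3:ℝ)/2) * cos (√x * π)) (-(π / 8)) (1/4) := by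
    refine ((Real.hasDerivAt_rpow_const (Or.inl hL.ne')).mul
      (hasDerivAt_cos_sqrt_mul_pi hL)).congr_deriv ?_
    simp only [one_div_four_rpow_three_div_two, sqrt_one_div_four, cos_one_div_two_mul_pi,
      sin_one_div_two_mul_pi]
    ring
  have hθL : ContinuousAt (fun x => theta (ε^2 * x)) (1/4) := by
    refine ContinuousAt.comp (g := theta) ?_ (by fun_prop)
    rwa [mul_one_div]
  have hP0 : (1/4 : ℝ) ^ ((3:ℝ)/2) * cos (√(1/4) * π) = 0 := by
    simp only [sqrt_one_div_four, cos_one_div_two_mul_pi, mul_zero]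
  refine ((hasDerivAt_sin_sqrt_mul_pi hL).sub
    ((hP.mul_of_eq_zero hP0 hθL).const_mul (ε^3))).congr_deriv ?_
  simp only [sqrt_one_div_four, cos_one_div_two_mul_pi, mul_one_div]
  ring

lemma deriv_deriv_eq_of_Tfun_eq_zero {ε : ℝ} {u : ℝ → ℝ} (hu : AnalyticAt ℝ u 0)
    (hu0 : u 0 = 1/4) (hroot : ∀ᶠ μ in 𝓝 0, Tfun ε μ (u μ) = 0)
    (hθ : ContinuousAt theta (ε^2 / 4)) :
    deriv (deriv u) 0 = (1/π^2) * (-8 + ε^3 * π * theta (ε^2/4)) := by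
  set a := deriv u 0
  set b := deriv (deriv u) 0
  have hua : HasDerivAt u a 0 := hu.differentiableAt.hasDerivAt
  have hub : HasDerivAt (deriv u) b 0 := hu.deriv.differentiableAt.hasDerivAt
  have hpos : ∀ᶠ μ in 𝓝 0, 0 < u μ :=
    hu.continuousAt.eventually (lt_mem_nhds (by rw [hu0]; norm_num))
  have hf : ∀ᶠ μ in 𝓝 0, HasDerivAt (Tfun₀ ∘ u) (Tfun₀' (u μ) * deriv u μ) μ := by
    filter_upwards [hu.eventually_analyticAt, hpos] with μ hμ hμpos
    exact (hasDerivAt_Tfun₀ hμpos).comp μ hμ.differentiableAt.hasDerivAt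
  have hf' : HasDerivAt (fun μ => Tfun₀' (u μ) * deriv u μ) (-π * a * a + Tfun₀' (1/4) * b) 0 := by
    have h := hasDerivAt_Tfun₀'
    rw [← hu0] at h ⊢
    exact (h.comp 0 hua).mul hub
  have hg : HasDerivAt (fun μ => -Tfun₁ ε (u μ)) (-(ε^3 * π / 8 * theta (ε^2 / 4) * a)) 0 := by
    have h := hasDerivAt_Tfun₁ hθ
    rw [← hu0] at h
    exact (h.comp 0 hua).neg
  have hfg : Tfun₀ ∘ u =ᶠ[𝓝 0] fun μ => μ * -Tfun₁ ε (u μ) := by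
    filter_upwards [hroot] with μ hμ
    rw [Tfun_eq] at hμ
    simp only [Function.comp_apply]
    linear_combination hμ
  obtain ⟨ha, hb⟩ := eq_and_eq_two_mul_of_eventuallyEq_mul hf hf' hfg hg
  rw [hu0, Tfun₀'_one_div_four, Tfun₁_one_div_four] at ha
  rw [Tfun₀'_one_div_four] at hb
  have hπ : π ≠ 0 := pi_ne_zero
  have ha' : a = 2 / π := by field_simp at ha ⊢; linarith
  have hb' : π^2 * b = -8 + ε^3 * π * theta (ε^2/4) := by
    rw [ha'] at hb
    field_simp at hb
    linarith
  rw [← hb']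
  field_simp

theorem stmt7_general (δ r : ℝ) (hδ : 0 < δ) (hr : 0 < r) (Λ : ℝ → ℝ → ℝ)
    (hanal : AnalyticOnNhd ℝ (fun p : ℝ × ℝ => Λ p.1 p.2)
      (Set.Ioo (-δ) δ ×ˢ Set.Ioo (-δ) δ))
    (hroot : ∀ ε μ : ℝ, |ε| < δ → |μ| < δ → Tfun ε μ (Λ ε μ) = 0)
    (huniq : ∀ ε μ : ℝ, |ε| < δ → |μ| < δ →
      ∀ L : ℝ, Tfun ε μ L = 0 → |L - 1/4| < r → L = Λ ε μ) :
    ∃ δ' : ℝ, 0 < δ' ∧ δ' ≤ δ ∧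
      ∀ ε : ℝ, |ε| < δ' →
        deriv (deriv (fun μ => Λ ε μ)) 0
          = (1/π^2) * (-8 + ε^3 * π * theta (ε^2/4)) := by
  refine ⟨min δ 4, lt_min hδ four_pos, min_le_left _ _, fun ε hε => ?_⟩
  have hεδ : |ε| < δ := hε.trans_le (min_le_left _ _)
  have hθ : ContinuousAt theta (ε^2 / 4) := by
    refine continuousAt_theta ?_
    nlinarith [abs_nonneg ε, sq_abs ε, hε.trans_le (min_le_right _ _)]
  have hroot0 : Tfun ε 0 (1/4) = 0 := by
    rw [Tfun_eq, Tfun₀_one_div_four, zero_mul, add_zero]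
  have hu0 : Λ ε 0 = 1/4 :=
    (huniq ε 0 hεδ (by simpa using hδ) _ hroot0 (by simpa using hr)).symm
  have hu : AnalyticAt ℝ (fun μ => Λ ε μ) 0 :=
    (hanal (ε, 0) ⟨abs_lt.mp hεδ, by simpa using hδ⟩).comp
      (analyticAt_const.prod analyticAt_id)
  have hroots : ∀ᶠ μ in 𝓝 0, Tfun ε μ (Λ ε μ) = 0 := by
    filter_upwards [Metric.ball_mem_nhds (0:ℝ) hδ] with μ hμ
    exact hroot ε μ hεδ (by simpa using hμ)
  exact deriv_deriv_eq_of_Tfun_eq_zero hu hu0 hroots hθ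

/-- if `Λ(ε,μ)` is the (jointly real-analytic, locally unique near `1/4`)
solution of `T(ε, μ, Λ(ε,μ)) = 0` with `Λ(0,0) = 1/4`, then for all sufficiently small `ε`
one has `∂²Λ/∂μ²(ε, 0) = (1/π²)(-8 + ε³ π θ(ε²/4))`. -/
theorem stmt7 (δ r : ℝ) (hδ : 0 < δ) (hr : 0 < r) (Λ : ℝ → ℝ → ℝ)
    (hanal : AnalyticOnNhd ℝ (fun p : ℝ × ℝ => Λ p.1 p.2)
      (Set.Ioo (-δ) δ ×ˢ Set.Ioo (-δ) δ))
    (h00 : Λ 0 0 = 1/4)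
    (hroot : ∀ ε μ : ℝ, |ε| < δ → |μ| < δ → Tfun ε μ (Λ ε μ) = 0)
    (hnear : ∀ ε μ : ℝ, |ε| < δ → |μ| < δ → |Λ ε μ - 1/4| < r)
    (huniq : ∀ ε μ : ℝ, |ε| < δ → |μ| < δ →
      ∀ L : ℝ, Tfun ε μ L = 0 → |L - 1/4| < r → L = Λ ε μ) :
    ∃ δ' : ℝ, 0 < δ' ∧ δ' ≤ δ ∧
      ∀ ε : ℝ, |ε| < δ' →
        deriv (deriv (fun μ => Λ ε μ)) 0
          = (1/π^2) * (-8 + ε^3 * π * theta (ε^2/4)) :=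
  stmt7_general δ r hδ hr Λ hanal hroot huniq
end
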